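/- arXiv:0711.5007 — 2 statements merged into one kernel-verified Lean document; each statement's English description precedes it below -/
import Mathlib

section
/- Let p be a prime and let G be a finite p-group that is not elementary abelian. Then G contains a central subgroup C of order p that is not a direct factor of G; that is, there is no normal subgroup K of G with K ∩ C = 1 and K·C = G. -/
/-!
If `G = K C` with `K` normal and `C` central of order `p`, then `G ⧸ K` is a quotient of `C`,
so `K` contains all `p`-th powers and commutators, i.e. `G^p [G, G] ≤ K`, and hence `K ∩ C = 1`
forces `C ∩ G^p [G, G] = 1`. So it suffices to find a central subgroup of order `p` inside
`G^p [G, G]`: this normal subgroup is nontrivial because `G` is not elementary abelian, and a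
nontrivial normal subgroup of a finite `p`-group meets the center nontrivially.
-/

/-- A group is elementary abelian for the prime `p` if it is abelian and every element has
order dividing `p`. -/
def IsElementaryAbelian (p : ℕ) (G : Type) [Group G] : Prop :=
  (∀ a b : G, a * b = b * a) ∧ ∀ g : G, g ^ p = 1

open scoped Pointwise commutatorElement

open Subgroup

section PGroup

variable {G : Type*} [Group G] {p : ℕ} [Fact p.Prime]

theorem IsPGroup.inf_center_ne_bot [Finite G] (hG : IsPGroup p G) {N : Subgroup G} [N.Normal]
    (hN : N ≠ ⊥) : N ⊓ center G ≠ ⊥ := by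
  have hpN : p ∣ Nat.card N :=
    (hG.to_subgroup N).card_eq_or_dvd.resolve_left (mt card_eq_one.mp hN)
  obtain ⟨x, hx, hx1⟩ := (hG.of_equiv ConjAct.toConjAct)
    |>.exists_fixed_point_of_prime_dvd_card_of_fixed_point N hpN (a := 1) fun g => smul_one g
  have hxZ : (x : G) ∈ center G := by
    rw [← SetLike.mem_coe, ← ConjAct.fixedPoints_eq_center]
    exact fun g => by rw [← ConjAct.Subgroup.val_conj_smul, hx g]
  exact ne_bot_iff_exists_ne_one.mpr
    ⟨⟨x, x.2, hxZ⟩, fun h => hx1 (Subtype.ext congr(($h : G)).symm)⟩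

theorem IsPGroup.exists_orderOf_eq_prime_of_ne_bot {H : Subgroup G} (hH : IsPGroup p H)
    (hH1 : H ≠ ⊥) : ∃ x ∈ H, orderOf x = p := by
  obtain ⟨y, hy⟩ := ne_bot_iff_exists_ne_one.mp hH1
  refine ⟨(y ^ (orderOf y / p) : H), SetLike.coe_mem _, ?_⟩
  rw [orderOf_coe, orderOf_pow_orderOf_div (hH.isOfFinOrder (NeZero.ne p) y).orderOf_pos.ne'
    (hH.dvd_orderOf hy)]

end PGroup

section PowCommutatorSubgroup

variable (p : ℕ) (G : Type*) [Group G]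

/-- The subgroup `G^p [G, G]`; for a finite `p`-group it is the Frattini subgroup. -/
def powCommutatorSubgroup : Subgroup G :=
  normalClosure ({g | ∃ a : G, a ^ p = g} ∪ commutatorSet G)

instance : (powCommutatorSubgroup p G).Normal :=
  normalClosure_normal

variable {p G}

theorem powCommutatorSubgroup_le {K : Subgroup G} [K.Normal] (hpow : ∀ a : G, a ^ p ∈ K)
    (hcomm : ∀ a b : G, ⁅a, b⁆ ∈ K) : powCommutatorSubgroup p G ≤ K :=
  normalClosure_le_normal <| by rintro _ (⟨a, rfl⟩ | ⟨a, b, rfl⟩) <;> simp [*]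

theorem powCommutatorSubgroup_eq_bot_iff {G : Type} [Group G] :
    powCommutatorSubgroup p G = ⊥ ↔ IsElementaryAbelian p G := by
  rw [powCommutatorSubgroup, normalClosure_eq_bot_iff, Set.union_subset_iff, IsElementaryAbelian,
    and_comm]
  refine and_congr ⟨fun h a b => ?_, ?_⟩ (by simp [Set.subset_def])
  · exact commutatorElement_eq_one_iff_mul_comm.mp (h (commutator_mem_commutatorSet a b))
  · rintro h _ ⟨a, b, rfl⟩
    exact commutatorElement_eq_one_iff_mul_comm.mpr (h a b)

/-- `G ⧸ K` is the image of `C`, hence abelian of exponent dividing `p`. -/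
theorem powCommutatorSubgroup_le_of_sup_eq_top {K C : Subgroup G} [K.Normal]
    (hC : C ≤ center G) (hCp : ∀ c ∈ C, c ^ p = 1) (hKC : K ⊔ C = ⊤) :
    powCommutatorSubgroup p G ≤ K := by
  have hdecomp : ∀ a : G, ∃ c ∈ C, (a : G ⧸ K) = c := by
    intro a
    obtain ⟨k, hk, c, hc, rfl⟩ : a ∈ (K : Set G) * (C : Set G) := by
      rw [← normal_mul, hKC]; trivial
    exact ⟨c, hc, by simpa [QuotientGroup.eq_one_iff]⟩
  refine powCommutatorSubgroup_le (fun a => ?_) (fun a b => ?_) <;>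
    rw [← QuotientGroup.eq_one_iff]
  · obtain ⟨c, hc, hac⟩ := hdecomp a
    rw [QuotientGroup.mk_pow, hac, ← QuotientGroup.mk_pow, hCp c hc, QuotientGroup.mk_one]
  · obtain ⟨c, hc, hac⟩ := hdecomp a
    obtain ⟨d, hd, hbd⟩ := hdecomp b
    have hcd : Commute c d := mem_center_iff.mp (hC hd) c
    rw [← QuotientGroup.mk'_apply, map_commutatorElement, QuotientGroup.mk'_apply,
      QuotientGroup.mk'_apply, hac, hbd, commutatorElement_eq_one_iff_commute]
    exact hcd.map (QuotientGroup.mk' K)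

end PowCommutatorSubgroup

/-- A finite `p`-group which is not elementary abelian contains a central subgroup of order `p`
which is not a direct factor. -/
theorem exists_central_subgroup_not_direct_factor
    (p : ℕ) (hp : p.Prime) (G : Type) [Group G] [Finite G] (hG : IsPGroup p G)
    (hne : ¬ IsElementaryAbelian p G) :
    ∃ C : Subgroup G, C ≤ Subgroup.center G ∧ Nat.card C = p ∧
      ¬ ∃ K : Subgroup G, K.Normal ∧ K ⊓ C = ⊥ ∧ K ⊔ C = ⊤ := by
  have : Fact p.Prime := ⟨hp⟩
  have hNZ : powCommutatorSubgroup p G ⊓ center G ≠ ⊥ :=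
    hG.inf_center_ne_bot (mt powCommutatorSubgroup_eq_bot_iff.mp hne)
  obtain ⟨x, ⟨hxN, hxZ⟩, hx⟩ := (hG.to_subgroup _).exists_orderOf_eq_prime_of_ne_bot hNZ
  have hCZ : zpowers x ≤ center G := zpowers_le.mpr hxZ
  have hCp : ∀ c ∈ zpowers x, c ^ p = 1 := by
    rintro _ ⟨k, rfl⟩
    rw [← zpow_natCast, ← zpow_mul, mul_comm, zpow_mul, zpow_natCast, ← hx,
      pow_orderOf_eq_one, one_zpow]
  refine ⟨zpowers x, hCZ, by rw [Nat.card_zpowers, hx], ?_⟩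
  rintro ⟨K, hK, hKC, hKC'⟩
  have hxKC : x ∈ K ⊓ zpowers x :=
    ⟨powCommutatorSubgroup_le_of_sup_eq_top hCZ hCp hKC' hxN, mem_zpowers x⟩
  rw [hKC, mem_bot] at hxKC
  exact hp.ne_one (by rw [← hx, hxKC, orderOf_one])
end

section
/- Let p be a prime and let α, β, γ, δ be positive integers with 0 ≤ γ − δ ≤ min{α, β}, let G = G(α,β,γ,δ), and let ε = max{α, β, 2γ − δ}. Then the three subgroups ⟨a, c⟩, ⟨b, c⟩ and ⟨a, b^{p^{γ−δ}}⟩ of G each have index dividing p^ε in G, and their intersection ⟨a,c⟩ ∩ ⟨b,c⟩ ∩ ⟨a, b^{p^{γ−δ}}⟩ is the trivial subgroup. -/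
open scoped commutatorElement

/-- The relators for the presentation
`⟨a, b, c ∣ [a,c] = [b,c] = 1 = a^{p^α} = b^{p^β} = c^{p^γ}, [a,b] = c^{p^δ}⟩`,
where `a`, `b`, `c` are the generators indexed by `0`, `1`, `2 : Fin 3`. -/
def pgRels (p α β γ δ : ℕ) : Set (FreeGroup (Fin 3)) :=
  {⁅FreeGroup.of (0 : Fin 3), FreeGroup.of (2 : Fin 3)⁆, ⁅FreeGroup.of (1 : Fin 3), FreeGroup.of (2 : Fin 3)⁆,
    FreeGroup.of (0 : Fin 3) ^ p ^ α, FreeGroup.of (1 : Fin 3) ^ p ^ β, FreeGroup.of (2 : Fin 3) ^ p ^ γ,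
    ⁅FreeGroup.of (0 : Fin 3), FreeGroup.of (1 : Fin 3)⁆ * (FreeGroup.of (2 : Fin 3) ^ p ^ δ)⁻¹}

/-- The group `G(α,β,γ,δ)` with presentation
`⟨a, b, c ∣ [a,c] = [b,c] = 1 = a^{p^α} = b^{p^β} = c^{p^γ}, [a,b] = c^{p^δ}⟩`. -/
abbrev GG (p α β γ δ : ℕ) : Type := PresentedGroup (pgRels p α β γ δ)

/-- The generator `a` of `G(α,β,γ,δ)`. -/
def ga (p α β γ δ : ℕ) : GG p α β γ δ := PresentedGroup.of (0 : Fin 3)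
/-- The generator `b` of `G(α,β,γ,δ)`. -/
def gb (p α β γ δ : ℕ) : GG p α β γ δ := PresentedGroup.of (1 : Fin 3)
/-- The generator `c` of `G(α,β,γ,δ)`. -/
def gc (p α β γ δ : ℕ) : GG p α β γ δ := PresentedGroup.of (2 : Fin 3)

/-!
Since `c` is central and `⁅a, b⁆ = c ^ p ^ δ`, conjugating a generator by another one only
multiplies it by a central power of `c`. Hence `b` normalizes `⟨a, c⟩` and `⟨c, a, b^{p^{γ-δ}}⟩`,
`a` normalizes `⟨b, c⟩`, and `c` normalizes everything; each step of the chains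
`⟨a, c⟩ ≤ G`, `⟨b, c⟩ ≤ G` and `⟨a, b^{p^{γ-δ}}⟩ ≤ ⟨c, a, b^{p^{γ-δ}}⟩ ≤ G` adjoins one such
normalizing element `g` with `g ^ n` already in the smaller group, so its index divides `n`
(namely `p^β`, `p^α`, `p^γ` and `p^{γ-δ}`).

For the intersection, the homomorphisms `G → ℤ/p^α` and `G → ℤ/p^β` reading off the exponents
of `a` and `b` vanish on `⟨b, c⟩` and `⟨a, c⟩` respectively. Since `⁅a, b^{p^{γ-δ}}⁆ = c^{p^γ} = 1`,
every element of `⟨a, b^{p^{γ-δ}}⟩` is `a^i b^{p^{γ-δ} m}`, and if both homomorphisms kill it,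
then `p^α ∣ i` and `p^β ∣ p^{γ-δ} m`, so it is trivial.
-/

namespace Subgroup

variable {G : Type*} [Group G]

theorem relIndex_zpowers_dvd {K : Subgroup G} {g : G} {n : ℕ} (hn : g ^ n ∈ K) :
    K.relIndex (zpowers g) ∣ n := by
  -- pull back along `ℤ → G`, `k ↦ g ^ k`, to a subgroup of `ℤ` containing `n`
  rw [← relIndex_toAddSubgroup]
  change (toAddSubgroup K).relIndex (AddSubgroup.zmultiples (Additive.ofMul g)) ∣ n
  rw [← AddSubgroup.range_zmultiplesHom, ← AddSubgroup.index_comap]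
  have hle : AddSubgroup.zmultiples (n : ℤ) ≤
      (toAddSubgroup K).comap (zmultiplesHom _ (Additive.ofMul g)) := by
    rw [AddSubgroup.zmultiples_le]
    simpa using hn
  simpa using AddSubgroup.index_dvd_of_le hle

theorem relIndex_sup_of_le_normalizer {H N : Subgroup G} (hLE : H ≤ normalizer (N : Set G)) :
    N.relIndex (H ⊔ N) = N.relIndex H := by
  have := normal_subgroupOf_of_le_normalizer hLE
  have := normal_subgroupOf_sup_of_le_normalizer hLE
  exact Nat.card_congr (QuotientGroup.quotientInfEquivProdNormalizerQuotient H N hLE).toEquiv.symm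

theorem relIndex_closure_insert_dvd {s : Set G} {g : G} {n : ℕ}
    (hg : g ∈ normalizer (closure s : Set G)) (hn : g ^ n ∈ closure s) :
    (closure s).relIndex (closure (insert g s)) ∣ n := by
  rw [← Set.singleton_union, closure_union, ← zpowers_eq_closure,
    relIndex_sup_of_le_normalizer (zpowers_le.2 hg)]
  exact relIndex_zpowers_dvd hn

theorem mem_normalizer_closure_of_commutatorElement_mem {s : Set G} {g : G}
    (h : ∀ x ∈ s, ⁅g, x⁆ ∈ closure s ⊓ center G) : g ∈ normalizer (closure s : Set G) := by
  have hconj : ∀ x, MulAut.conj g x = ⁅g, x⁆ * x := fun x => by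
    simp [commutatorElement_def]
  rw [mem_normalizer_iff_map_conj_eq, MonoidHom.map_closure]
  refine le_antisymm ((closure_le _).2 ?_) ((closure_le _).2 fun x hx => ?_)
  · rintro _ ⟨x, hx, rfl⟩
    rw [SetLike.mem_coe, MonoidHom.coe_coe, hconj]
    exact mul_mem (h x hx).1 (subset_closure hx)
  · obtain ⟨hs, hz⟩ := h x hx
    rw [← MonoidHom.map_closure]
    refine ⟨⁅g, x⁆⁻¹ * x, mul_mem (inv_mem hs) (subset_closure hx), ?_⟩
    -- `g (⁅g, x⁆⁻¹ x) g⁻¹ = ⁅g, x⁆⁻¹ (g x g⁻¹) = x`, as `⁅g, x⁆` is central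
    rw [MonoidHom.coe_coe, map_mul, hconj x, (MulAut.conj g).map_inv, MulAut.conj_apply,
      mem_center_iff.1 hz g, mul_inv_cancel_right, inv_mul_cancel_left]

end Subgroup

open Subgroup

theorem Commute.exists_zpow_mul_zpow_eq_of_mem_closure_pair {G : Type*} [Group G] {x y z : G}
    (hxy : Commute x y) (hz : z ∈ closure {x, y}) : ∃ m n : ℤ, x ^ m * y ^ n = z := by
  induction hz using closure_induction with
  | mem z hz =>
    rcases hz with rfl | rfl
    exacts [⟨1, 0, by simp⟩, ⟨0, 1, by simp⟩]
  | one => exact ⟨0, 0, by simp⟩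
  | mul _ _ _ _ h₁ h₂ =>
    obtain ⟨m, n, rfl⟩ := h₁
    obtain ⟨m', n', rfl⟩ := h₂
    refine ⟨m + m', n + n', ?_⟩
    rw [zpow_add, zpow_add]
    simp only [mul_assoc]
    rw [(hxy.zpow_zpow m' n).left_comm]
  | inv _ _ h =>
    obtain ⟨m, n, rfl⟩ := h
    refine ⟨-m, -n, ?_⟩
    rw [mul_inv_rev, zpow_neg, zpow_neg]
    exact (hxy.zpow_zpow m n).inv_inv.eq

theorem commutatorElement_pow_right_of_commute {G : Type*} [Group G] {x y : G}
    (h : Commute ⁅x, y⁆ y) (n : ℕ) : ⁅x, y ^ n⁆ = ⁅x, y⁆ ^ n := by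
  have hconj : x * y * x⁻¹ = ⁅x, y⁆ * y := by group
  rw [commutatorElement_def, ← conj_pow, hconj, h.mul_pow, mul_inv_cancel_right]

theorem zpow_eq_one_of_intCast_eq_zero {G : Type*} [Group G] {x : G} {n : ℕ} (hx : x ^ n = 1)
    {i : ℤ} (hi : (i : ZMod n) = 0) : x ^ i = 1 := by
  obtain ⟨k, rfl⟩ := (ZMod.intCast_zmod_eq_zero_iff_dvd i n).1 hi
  rw [zpow_mul, zpow_natCast, hx, one_zpow]

theorem ofAdd_one_pow_eq_one (n : ℕ) : Multiplicative.ofAdd (1 : ZMod n) ^ n = 1 := by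
  simp [← ofAdd_nsmul]

namespace GG

variable {p α β γ δ : ℕ}

theorem ga_pow_eq_one : ga p α β γ δ ^ p ^ α = 1 :=
  (map_pow _ _ _).symm.trans (PresentedGroup.one_of_mem (by simp [pgRels]))

theorem gb_pow_eq_one : gb p α β γ δ ^ p ^ β = 1 :=
  (map_pow _ _ _).symm.trans (PresentedGroup.one_of_mem (by simp [pgRels]))

theorem gc_pow_eq_one : gc p α β γ δ ^ p ^ γ = 1 :=
  (map_pow _ _ _).symm.trans (PresentedGroup.one_of_mem (by simp [pgRels]))

theorem commute_ga_gc : Commute (ga p α β γ δ) (gc p α β γ δ) :=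
  commutatorElement_eq_one_iff_commute.1 <|
    (map_commutatorElement _ _ _).symm.trans (PresentedGroup.one_of_mem (by simp [pgRels]))

theorem commute_gb_gc : Commute (gb p α β γ δ) (gc p α β γ δ) :=
  commutatorElement_eq_one_iff_commute.1 <|
    (map_commutatorElement _ _ _).symm.trans (PresentedGroup.one_of_mem (by simp [pgRels]))

theorem commutatorElement_ga_gb : ⁅ga p α β γ δ, gb p α β γ δ⁆ = gc p α β γ δ ^ p ^ δ :=
  (map_commutatorElement _ _ _).symm.trans <|
    (PresentedGroup.mk_eq_mk_of_mul_inv_mem (by simp [pgRels])).trans (map_pow _ _ _)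

theorem eq_top_of_generators_mem {H : Subgroup (GG p α β γ δ)} (ha : ga p α β γ δ ∈ H)
    (hb : gb p α β γ δ ∈ H) (hc : gc p α β γ δ ∈ H) : H = ⊤ :=
  eq_top_iff.2 fun x _ => PresentedGroup.generated_by _ H (fun i => by fin_cases i <;> assumption) x

theorem gc_mem_center : gc p α β γ δ ∈ center (GG p α β γ δ) := by
  refine mem_center_iff.2 fun x => mem_centralizer_singleton_iff.1 ?_
  rw [eq_top_of_generators_mem (H := centralizer {gc p α β γ δ})
    (mem_centralizer_singleton_iff.2 commute_ga_gc.eq)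
    (mem_centralizer_singleton_iff.2 commute_gb_gc.eq) (mem_centralizer_singleton_iff.2 rfl)]
  trivial

theorem commutatorElement_gb_ga : ⁅gb p α β γ δ, ga p α β γ δ⁆ = (gc p α β γ δ ^ p ^ δ)⁻¹ := by
  rw [← commutatorElement_ga_gb, commutatorElement_inv]

theorem commute_ga_gb_pow (h : δ ≤ γ) : Commute (ga p α β γ δ) (gb p α β γ δ ^ p ^ (γ - δ)) := by
  have hcomm : Commute ⁅ga p α β γ δ, gb p α β γ δ⁆ (gb p α β γ δ) :=
    commutatorElement_ga_gb ▸ (commute_gb_gc.pow_right _).symm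
  rw [← commutatorElement_eq_one_iff_commute, commutatorElement_pow_right_of_commute hcomm,
    commutatorElement_ga_gb, ← pow_mul, ← pow_add, Nat.add_sub_cancel' h, gc_pow_eq_one]

theorem lift_eq_one_of_mem_pgRels {A : Type*} [CommGroup A] {f : Fin 3 → A}
    (ha : f 0 ^ p ^ α = 1) (hb : f 1 ^ p ^ β = 1) (hc : f 2 = 1) :
    ∀ r ∈ pgRels p α β γ δ, FreeGroup.lift f r = 1 := by
  simp only [pgRels, Set.mem_insert_iff, Set.mem_singleton_iff]
  rintro r (rfl | rfl | rfl | rfl | rfl | rfl) <;> simp [commutatorElement_def, ha, hb, hc]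

variable (p α β γ δ) in
def toZModA : GG p α β γ δ →* Multiplicative (ZMod (p ^ α)) :=
  PresentedGroup.toGroup (f := ![.ofAdd 1, 1, 1])
    (lift_eq_one_of_mem_pgRels (ofAdd_one_pow_eq_one _) (one_pow _) rfl)

variable (p α β γ δ) in
def toZModB : GG p α β γ δ →* Multiplicative (ZMod (p ^ β)) :=
  PresentedGroup.toGroup (f := ![1, .ofAdd 1, 1])
    (lift_eq_one_of_mem_pgRels (one_pow _) (ofAdd_one_pow_eq_one _) rfl)

@[simp] theorem toZModA_ga : toZModA p α β γ δ (ga p α β γ δ) = .ofAdd 1 :=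
  PresentedGroup.toGroup.of _
@[simp] theorem toZModA_gb : toZModA p α β γ δ (gb p α β γ δ) = 1 := PresentedGroup.toGroup.of _
@[simp] theorem toZModA_gc : toZModA p α β γ δ (gc p α β γ δ) = 1 := PresentedGroup.toGroup.of _
@[simp] theorem toZModB_ga : toZModB p α β γ δ (ga p α β γ δ) = 1 := PresentedGroup.toGroup.of _
@[simp] theorem toZModB_gb : toZModB p α β γ δ (gb p α β γ δ) = .ofAdd 1 :=
  PresentedGroup.toGroup.of _
@[simp] theorem toZModB_gc : toZModB p α β γ δ (gc p α β γ δ) = 1 := PresentedGroup.toGroup.of _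

theorem closure_ga_gc_le_ker_toZModB :
    closure {ga p α β γ δ, gc p α β γ δ} ≤ (toZModB p α β γ δ).ker := by
  simp [closure_le, Set.insert_subset_iff]

theorem closure_gb_gc_le_ker_toZModA :
    closure {gb p α β γ δ, gc p α β γ δ} ≤ (toZModA p α β γ δ).ker := by
  simp [closure_le, Set.insert_subset_iff]

theorem closure_ga_gb_pow_inf_ker_inf_ker (h : δ ≤ γ) :
    closure {ga p α β γ δ, gb p α β γ δ ^ p ^ (γ - δ)} ⊓ (toZModA p α β γ δ).ker ⊓
      (toZModB p α β γ δ).ker = ⊥ := by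
  refine eq_bot_iff.2 fun g hg => ?_
  rw [mem_inf, mem_inf, MonoidHom.mem_ker, MonoidHom.mem_ker] at hg
  obtain ⟨⟨hg, hA⟩, hB⟩ := hg
  obtain ⟨i, m, rfl⟩ := (commute_ga_gb_pow h).exists_zpow_mul_zpow_eq_of_mem_closure_pair hg
  rw [← zpow_natCast, ← zpow_mul] at hB ⊢
  simp only [map_mul, map_zpow, map_pow, toZModA_ga, toZModA_gb, toZModB_ga, toZModB_gb,
    one_pow, one_zpow, mul_one, one_mul, ← ofAdd_zsmul, zsmul_one, ofAdd_eq_one] at hA hB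
  rw [mem_bot, zpow_eq_one_of_intCast_eq_zero ga_pow_eq_one hA,
    zpow_eq_one_of_intCast_eq_zero gb_pow_eq_one hB, one_mul]

theorem commutatorElement_gb_ga_mem_inf_center {H : Subgroup (GG p α β γ δ)}
    (hc : gc p α β γ δ ∈ H) : ⁅gb p α β γ δ, ga p α β γ δ⁆ ∈ H ⊓ center (GG p α β γ δ) := by
  rw [commutatorElement_gb_ga]
  exact mem_inf.2 ⟨inv_mem (pow_mem hc _), inv_mem (pow_mem gc_mem_center _)⟩

theorem index_closure_ga_gc_dvd : (closure {ga p α β γ δ, gc p α β γ δ}).index ∣ p ^ β := by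
  have htop : closure {gb p α β γ δ, ga p α β γ δ, gc p α β γ δ} = ⊤ :=
    eq_top_of_generators_mem (subset_closure (by simp)) (subset_closure (by simp))
      (subset_closure (by simp))
  rw [← relIndex_top_right, ← htop]
  refine relIndex_closure_insert_dvd (mem_normalizer_closure_of_commutatorElement_mem ?_) ?_
  · simp only [Set.mem_insert_iff, Set.mem_singleton_iff]
    rintro x (rfl | rfl)
    · exact commutatorElement_gb_ga_mem_inf_center (subset_closure (by simp))
    · rw [commutatorElement_eq_one_iff_commute.2 commute_gb_gc]
      exact one_mem _
  · rw [gb_pow_eq_one]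
    exact one_mem _

theorem index_closure_gb_gc_dvd : (closure {gb p α β γ δ, gc p α β γ δ}).index ∣ p ^ α := by
  have htop : closure {ga p α β γ δ, gb p α β γ δ, gc p α β γ δ} = ⊤ :=
    eq_top_of_generators_mem (subset_closure (by simp)) (subset_closure (by simp))
      (subset_closure (by simp))
  rw [← relIndex_top_right, ← htop]
  refine relIndex_closure_insert_dvd (mem_normalizer_closure_of_commutatorElement_mem ?_) ?_
  · simp only [Set.mem_insert_iff, Set.mem_singleton_iff]
    rintro x (rfl | rfl)
    · rw [commutatorElement_ga_gb]
      exact mem_inf.2 ⟨pow_mem (subset_closure (by simp)) _, pow_mem gc_mem_center _⟩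
    · rw [commutatorElement_eq_one_iff_commute.2 commute_ga_gc]
      exact one_mem _
  · rw [ga_pow_eq_one]
    exact one_mem _

theorem index_closure_gc_ga_gb_pow_dvd :
    (closure {gc p α β γ δ, ga p α β γ δ, gb p α β γ δ ^ p ^ (γ - δ)}).index ∣ p ^ (γ - δ) := by
  have htop : closure {gb p α β γ δ, gc p α β γ δ, ga p α β γ δ, gb p α β γ δ ^ p ^ (γ - δ)} = ⊤ :=
    eq_top_of_generators_mem (subset_closure (by simp)) (subset_closure (by simp))
      (subset_closure (by simp))
  rw [← relIndex_top_right, ← htop]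
  refine relIndex_closure_insert_dvd (mem_normalizer_closure_of_commutatorElement_mem ?_)
    (subset_closure (by simp))
  simp only [Set.mem_insert_iff, Set.mem_singleton_iff]
  rintro x (rfl | rfl | rfl)
  · rw [commutatorElement_eq_one_iff_commute.2 commute_gb_gc]
    exact one_mem _
  · exact commutatorElement_gb_ga_mem_inf_center (subset_closure (by simp))
  · rw [commutatorElement_eq_one_iff_commute.2 (Commute.self_pow _ _)]
    exact one_mem _

theorem index_closure_ga_gb_pow_dvd (h : δ ≤ γ) :
    (closure {ga p α β γ δ, gb p α β γ δ ^ p ^ (γ - δ)}).index ∣ p ^ (2 * γ - δ) := by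
  rw [← relIndex_mul_index (closure_mono (Set.subset_insert (gc p α β γ δ) _)),
    show 2 * γ - δ = γ + (γ - δ) by omega, pow_add]
  refine mul_dvd_mul (relIndex_closure_insert_dvd (center_le_normalizer _ gc_mem_center) ?_)
    index_closure_gc_ga_gb_pow_dvd
  rw [gc_pow_eq_one]
  exact one_mem _

end GG

theorem GG_subgroups_index_and_trivial_intersection_general
    (p : ℕ) (α β γ δ : ℕ)
    (h1 : δ ≤ γ) :
    (Subgroup.closure {ga p α β γ δ, gc p α β γ δ}).index ∣
        p ^ max α (max β (2 * γ - δ)) ∧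
    (Subgroup.closure {gb p α β γ δ, gc p α β γ δ}).index ∣
        p ^ max α (max β (2 * γ - δ)) ∧
    (Subgroup.closure {ga p α β γ δ, gb p α β γ δ ^ p ^ (γ - δ)}).index ∣
        p ^ max α (max β (2 * γ - δ)) ∧
    Subgroup.closure {ga p α β γ δ, gc p α β γ δ} ⊓
        Subgroup.closure {gb p α β γ δ, gc p α β γ δ} ⊓
        Subgroup.closure {ga p α β γ δ, gb p α β γ δ ^ p ^ (γ - δ)} = ⊥ := by
  refine ⟨GG.index_closure_ga_gc_dvd.trans (pow_dvd_pow p (by omega)),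
    GG.index_closure_gb_gc_dvd.trans (pow_dvd_pow p (by omega)),
    (GG.index_closure_ga_gb_pow_dvd h1).trans (pow_dvd_pow p (by omega)), ?_⟩
  refine eq_bot_iff.2 fun g hg => ?_
  obtain ⟨⟨hac, hbc⟩, habp⟩ := mem_inf.1 hg |>.imp_left mem_inf.1
  exact (GG.closure_ga_gb_pow_inf_ker_inf_ker h1).le <|
    mem_inf.2 ⟨mem_inf.2 ⟨habp, GG.closure_gb_gc_le_ker_toZModA hbc⟩,
      GG.closure_ga_gc_le_ker_toZModB hac⟩

/-- For `G = G(α,β,γ,δ)` and `ε = max {α, β, 2γ − δ}`, the subgroups `⟨a, c⟩`, `⟨b, c⟩` and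
`⟨a, b^{p^{γ−δ}}⟩` each have index dividing `p ^ ε`, and their intersection is trivial. -/
theorem GG_subgroups_index_and_trivial_intersection
    (p : ℕ) (hp : p.Prime) (α β γ δ : ℕ)
    (hα : 0 < α) (hβ : 0 < β) (hγ : 0 < γ) (hδ : 0 < δ)
    (h1 : δ ≤ γ) (h2 : γ - δ ≤ min α β) :
    (Subgroup.closure {ga p α β γ δ, gc p α β γ δ}).index ∣
        p ^ max α (max β (2 * γ - δ)) ∧
    (Subgroup.closure {gb p α β γ δ, gc p α β γ δ}).index ∣
        p ^ max α (max β (2 * γ - δ)) ∧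
    (Subgroup.closure {ga p α β γ δ, gb p α β γ δ ^ p ^ (γ - δ)}).index ∣
        p ^ max α (max β (2 * γ - δ)) ∧
    Subgroup.closure {ga p α β γ δ, gc p α β γ δ} ⊓
        Subgroup.closure {gb p α β γ δ, gc p α β γ δ} ⊓
        Subgroup.closure {ga p α β γ δ, gb p α β γ δ ^ p ^ (γ - δ)} = ⊥ :=
  GG_subgroups_index_and_trivial_intersection_general p α β γ δ h1
end
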